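/- Let N ≥ 1 and let a be a nonzero complex number. Define the following linear operators on the space C^∞(ℝ^N ∖ {0}) of smooth complex-valued functions: H = (2/a) E_x + (a + N − 2)/a, E⁺ = (i/a) ‖x‖^a (multiplication by ‖x‖^a = exp(a·log‖x‖)), and E⁻ = (i/a) ‖x‖^{2−a} Δ, where E_x = Σ_{j=1}^N x_j ∂/∂x_j is the Euler operator and Δ the Laplacian. Then these operators satisfy the sl₂ commutation relations: [H, E⁺] = 2E⁺, [H, E⁻] = −2E⁻, and [E⁺, E⁻] = H. -/

import Mathlib

noncomputable section

/-- The analytic Laplacian `Δf = Σ_j ∂²f/∂x_j²` of a function on `ℝ^N`. -/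
def lap {N : ℕ} (f : EuclideanSpace ℝ (Fin N) → ℂ)
    (x : EuclideanSpace ℝ (Fin N)) : ℂ :=
  ∑ j : Fin N,
    fderiv ℝ (fun y => fderiv ℝ f y (EuclideanSpace.single j (1 : ℝ))) x
      (EuclideanSpace.single j (1 : ℝ))

/-- The Euler operator `E_x f(x) = Σ_j x_j ∂f/∂x_j (x)`, i.e. the derivative of `f`
at `x` in the direction `x`. -/
def eulerOp {N : ℕ} (f : EuclideanSpace ℝ (Fin N) → ℂ)
    (x : EuclideanSpace ℝ (Fin N)) : ℂ :=
  fderiv ℝ f x x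

/-- The operator `H = (2/a) E_x + (a + N - 2)/a`. -/
def opH {N : ℕ} (a : ℂ) (f : EuclideanSpace ℝ (Fin N) → ℂ)
    (x : EuclideanSpace ℝ (Fin N)) : ℂ :=
  (2 / a) * eulerOp f x + ((a + N - 2) / a) * f x

/-- The operator `E⁺ = (i/a) ‖x‖^a` (multiplication by `‖x‖^a`). -/
def opEp {N : ℕ} (a : ℂ) (f : EuclideanSpace ℝ (Fin N) → ℂ)
    (x : EuclideanSpace ℝ (Fin N)) : ℂ :=
  (Complex.I / a) * ((‖x‖ : ℂ) ^ a) * f x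

/-- The operator `E⁻ = (i/a) ‖x‖^{2-a} Δ`. -/
def opEm {N : ℕ} (a : ℂ) (f : EuclideanSpace ℝ (Fin N) → ℂ)
    (x : EuclideanSpace ℝ (Fin N)) : ℂ :=
  (Complex.I / a) * ((‖x‖ : ℂ) ^ (2 - a)) * lap f x

namespace SL2Aux

open Complex ContDiff

variable {N : ℕ}

abbrev Eu (N : ℕ) := EuclideanSpace ℝ (Fin N)

lemma inftyle : (∞ + 1 : WithTop ℕ∞) ≤ ∞ := by exact_mod_cast le_top

lemma onele : (1 : WithTop ℕ∞) ≤ ∞ := by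
  rw [show (1 : WithTop ℕ∞) = ((1:ℕ∞) : WithTop ℕ∞) from rfl]
  exact_mod_cast le_top

section diff
variable {g : Eu N → ℂ} {x : Eu N}

lemma cd_fderiv (hg : ContDiffOn ℝ ∞ g {x : Eu N | x ≠ 0}) :
    ContDiffOn ℝ ∞ (fderiv ℝ g) {x : Eu N | x ≠ 0} :=
  hg.fderiv_of_isOpen isOpen_ne inftyle

lemma cd_pd (hg : ContDiffOn ℝ ∞ g {x : Eu N | x ≠ 0}) (v : Eu N) :
    ContDiffOn ℝ ∞ (fun y => fderiv ℝ g y v) {x : Eu N | x ≠ 0} :=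
  (cd_fderiv hg).clm_apply contDiffOn_const

lemma cd_euler (hg : ContDiffOn ℝ ∞ g {x : Eu N | x ≠ 0}) :
    ContDiffOn ℝ ∞ (fun y => fderiv ℝ g y y) {x : Eu N | x ≠ 0} :=
  (cd_fderiv hg).clm_apply contDiffOn_id

lemma cd_lap (hg : ContDiffOn ℝ ∞ g {x : Eu N | x ≠ 0}) :
    ContDiffOn ℝ ∞ (lap g) {x : Eu N | x ≠ 0} := by
  have : ∀ j : Fin N, ContDiffOn ℝ ∞
      (fun y => fderiv ℝ (fun z => fderiv ℝ g z (EuclideanSpace.single j 1)) y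
        (EuclideanSpace.single j 1)) {x : Eu N | x ≠ 0} :=
    fun j => cd_pd (cd_pd hg _) _
  unfold lap
  exact ContDiffOn.sum fun j _ => this j

lemma da_of_cd (hg : ContDiffOn ℝ ∞ g {x : Eu N | x ≠ 0}) (hx : x ≠ 0) :
    DifferentiableAt ℝ g x :=
  ((hg.contDiffAt (isOpen_ne.mem_nhds hx)).differentiableAt (by simp))

lemma da_fderiv (hg : ContDiffOn ℝ ∞ g {x : Eu N | x ≠ 0}) (hx : x ≠ 0) :
    DifferentiableAt ℝ (fderiv ℝ g) x :=
  (((cd_fderiv hg).contDiffAt (isOpen_ne.mem_nhds hx)).differentiableAt (by simp))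
end diff

lemma sum_single (x : Eu N) : ∑ j, x j • EuclideanSpace.single j (1:ℝ) = x := by
  ext i
  rw [show ((∑ j, x j • EuclideanSpace.single j (1:ℝ)) i : ℝ)
      = ∑ j, (x j • EuclideanSpace.single j (1:ℝ) : Eu N) i from by
        rw [WithLp.ofLp_sum]; exact Finset.sum_apply i _ _]
  simp [EuclideanSpace.single_apply, Finset.sum_ite_eq']

lemma fderiv_self_eq_sum {g : Eu N → ℂ} {x : Eu N} :
    fderiv ℝ g x x = ∑ j, (x j : ℂ) * fderiv ℝ g x (EuclideanSpace.single j 1) := by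
  nth_rewrite 2 [← sum_single x]
  rw [map_sum]
  exact Finset.sum_congr rfl fun j _ => by
    rw [ContinuousLinearMap.map_smul]; simp [Complex.real_smul]

lemma inner_single (x : Eu N) (j : Fin N) :
    (inner ℝ x (EuclideanSpace.single j (1:ℝ)) : ℝ) = x j := by
  simp [EuclideanSpace.inner_single_right]

/-- The derivative CLM of `y ↦ (‖y‖:ℂ)^c` at `x ≠ 0`. -/
def Dphi (c : ℂ) (x : Eu N) : Eu N →L[ℝ] ℂ :=
  (innerSL ℝ x).smulRight (c * (‖x‖:ℂ)^c / ((‖x‖^2 : ℝ) : ℂ))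

lemma Dphi_apply (c : ℂ) (x v : Eu N) :
    Dphi c x v = ((inner ℝ x v : ℝ) : ℂ) * (c * (‖x‖:ℂ)^c / ((‖x‖^2 : ℝ) : ℂ)) := by
  simp [Dphi, Complex.real_smul]

lemma Qc_ne {x : Eu N} (hx : x ≠ 0) : ((‖x‖^2 : ℝ) : ℂ) ≠ 0 := by
  exact_mod_cast pow_ne_zero 2 (norm_ne_zero_iff.mpr hx)

lemma Dphi_self (c : ℂ) {x : Eu N} (hx : x ≠ 0) :
    Dphi c x x = c * (‖x‖:ℂ)^c := by
  rw [Dphi_apply, real_inner_self_eq_norm_sq]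
  field_simp
  rw [mul_assoc]; exact mul_div_cancel_left₀ _ (Qc_ne hx)

lemma Dphi_single (c : ℂ) (x : Eu N) (j : Fin N) :
    Dphi c x (EuclideanSpace.single j 1)
      = (x j : ℂ) * (c * (‖x‖:ℂ)^c / ((‖x‖^2 : ℝ) : ℂ)) := by
  rw [Dphi_apply, inner_single]

lemma hasFDerivAt_phi (c : ℂ) {x : Eu N} (hx : x ≠ 0) :
    HasFDerivAt (fun y : Eu N => (‖y‖:ℂ)^c) (Dphi c x) x := by
  have hq : HasFDerivAt (fun y : Eu N => ‖y‖^2) (2 • (innerSL ℝ x)) x :=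
    (hasStrictFDerivAt_norm_sq x).hasFDerivAt
  have hqx : ‖x‖^2 ≠ 0 := pow_ne_zero 2 (norm_ne_zero_iff.mpr hx)
  have hlog : HasFDerivAt (fun y : Eu N => Real.log (‖y‖^2))
      ((‖x‖^2)⁻¹ • (2 • (innerSL ℝ x))) x :=
    hq.log hqx
  have hg : ∀ t : ℝ, HasDerivAt (fun s : ℝ => Complex.exp ((c/2) * s))
      ((c/2) * Complex.exp ((c/2) * t)) t := by
    intro t
    have h1 : HasDerivAt (fun w : ℂ => Complex.exp ((c/2) * w))
        (Complex.exp ((c/2) * t) * (c/2)) (t : ℂ) := by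
      have h0 : HasDerivAt (fun w : ℂ => (c/2) * w) (c/2) (t:ℂ) := by
        simpa using (hasDerivAt_id (t:ℂ)).const_mul (c/2)
      exact (Complex.hasDerivAt_exp _).comp _ h0
    have := h1.comp_ofReal
    simpa [mul_comm] using this
  have hcomp := (hg (Real.log (‖x‖^2))).hasFDerivAt.comp x hlog
  have heq : (fun y : Eu N => (‖y‖:ℂ)^c) =ᶠ[nhds x]
      (fun s : ℝ => Complex.exp ((c/2) * s)) ∘ (fun y : Eu N => Real.log (‖y‖^2)) := by
    filter_upwards [IsOpen.mem_nhds isOpen_ne hx] with y hy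
    have hy' : (‖y‖ : ℂ) ≠ 0 := by
      simpa using (norm_ne_zero_iff.mpr (hy : y ≠ (0:Eu N)))
    simp only [Function.comp]
    rw [Complex.cpow_def_of_ne_zero hy', ← Complex.ofReal_log (norm_nonneg y)]
    congr 1
    rw [Real.log_pow]
    push_cast
    ring
  have := hcomp.congr_of_eventuallyEq heq
  refine this.congr_fderiv ?_
  ext v
  simp only [Dphi, ContinuousLinearMap.smulRight_apply, innerSL_apply_apply,
    ContinuousLinearMap.coe_comp', Function.comp_apply, ContinuousLinearMap.coe_smul',
    Pi.smul_apply, ContinuousLinearMap.smulRight_apply, ContinuousLinearMap.one_apply,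
    ContinuousLinearMap.toSpanSingleton_apply, Complex.real_smul]
  have hexp : Complex.exp ((c/2) * (Real.log (‖x‖^2) : ℝ)) = (‖x‖:ℂ)^c := by
    have hx' : (‖x‖ : ℂ) ≠ 0 := by simpa using (norm_ne_zero_iff.mpr hx)
    rw [Complex.cpow_def_of_ne_zero hx', ← Complex.ofReal_log (norm_nonneg x), Real.log_pow]
    push_cast; ring_nf
  rw [hexp]
  push_cast
  field_simp
  simp only [smul_eq_mul, nsmul_eq_mul]
  push_cast
  ring

lemma euler_phi_mul (c : ℂ) {x : Eu N} (hx : x ≠ 0) {g : Eu N → ℂ}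
    (hg : DifferentiableAt ℝ g x) :
    fderiv ℝ (fun y => (‖y‖:ℂ)^c * g y) x x
      = c * (‖x‖:ℂ)^c * g x + (‖x‖:ℂ)^c * fderiv ℝ g x x := by
  rw [fderiv_fun_mul (hasFDerivAt_phi c hx).differentiableAt hg]
  rw [(hasFDerivAt_phi c hx).fderiv]
  simp [Dphi_self c hx, smul_eq_mul]
  ring

lemma pd_phi_mul (c : ℂ) {y : Eu N} (hy : y ≠ 0) {g : Eu N → ℂ}
    (hg : DifferentiableAt ℝ g y) (j : Fin N) :
    fderiv ℝ (fun z => (‖z‖:ℂ)^c * g z) y (EuclideanSpace.single j 1)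
      = (‖y‖:ℂ)^c * fderiv ℝ g y (EuclideanSpace.single j 1)
        + c * (g y * ((y j : ℝ):ℂ) * ((‖y‖:ℂ)^c * (((‖y‖^2:ℝ):ℂ))⁻¹)) := by
  rw [fderiv_fun_mul (hasFDerivAt_phi c hy).differentiableAt hg]
  rw [(hasFDerivAt_phi c hy).fderiv]
  simp [Dphi_single, smul_eq_mul]
  ring

lemma pdA (c : ℂ) {x : Eu N} (hx : x ≠ 0) {g : Eu N → ℂ}
    (hg : DifferentiableAt ℝ g x) (j : Fin N)
    (hg2 : DifferentiableAt ℝ (fun y => fderiv ℝ g y (EuclideanSpace.single j 1)) x) :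
    fderiv ℝ (fun y => (‖y‖:ℂ)^c * fderiv ℝ g y (EuclideanSpace.single j 1)
      + c * (g y * ((y j : ℝ):ℂ) * ((‖y‖:ℂ)^c * (((‖y‖^2:ℝ):ℂ))⁻¹))) x
      (EuclideanSpace.single j 1)
    = (‖x‖:ℂ)^c * fderiv ℝ (fun y => fderiv ℝ g y (EuclideanSpace.single j 1)) x
        (EuclideanSpace.single j 1)
      + 2 * (c * (‖x‖:ℂ)^c / ((‖x‖^2:ℝ):ℂ)) * (x j : ℂ)
          * fderiv ℝ g x (EuclideanSpace.single j 1)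
      + c * g x * (‖x‖:ℂ)^c * (((‖x‖^2:ℝ):ℂ))⁻¹
      + c * (c-2) * g x * (‖x‖:ℂ)^c * (((‖x‖^2:ℝ):ℂ))⁻¹ * (((‖x‖^2:ℝ):ℂ))⁻¹
          * (x j : ℂ) * (x j : ℂ) := by
  have hphi := hasFDerivAt_phi c hx
  have hQ : HasFDerivAt (fun y : Eu N => ((‖y‖^2:ℝ):ℂ))
      (Complex.ofRealCLM.comp (2 • (innerSL ℝ x))) x :=
    Complex.ofRealCLM.hasFDerivAt.comp x (hasStrictFDerivAt_norm_sq x).hasFDerivAt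
  have hQinv : HasFDerivAt (fun y : Eu N => (((‖y‖^2:ℝ):ℂ))⁻¹)
      ((-ContinuousLinearMap.mulLeftRight ℝ ℂ ((((‖x‖^2:ℝ):ℂ))⁻¹)
        ((((‖x‖^2:ℝ):ℂ))⁻¹)).comp (Complex.ofRealCLM.comp (2 • (innerSL ℝ x)))) x :=
    (hasFDerivAt_inv' (Qc_ne hx)).comp x hQ
  have hCj : HasFDerivAt (fun y : Eu N => ((y j : ℝ):ℂ))
      (Complex.ofRealCLM.comp (EuclideanSpace.proj j)) x :=
    (Complex.ofRealCLM.comp (EuclideanSpace.proj (𝕜 := ℝ) j)).hasFDerivAt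
  have hA := ((hphi.fun_mul hg2.hasFDerivAt).fun_add
    ((((hg.hasFDerivAt.fun_mul hCj).fun_mul (hphi.fun_mul hQinv))).const_mul c))
  rw [hA.fderiv]
  simp only [ContinuousLinearMap.add_apply, ContinuousLinearMap.smul_apply,
    ContinuousLinearMap.coe_comp', Function.comp_apply, ContinuousLinearMap.neg_apply,
    ContinuousLinearMap.mulLeftRight_apply, Complex.ofRealCLM_apply,
    PiLp.proj_apply, Dphi_single, smul_eq_mul,
    ContinuousLinearMap.coe_smul', Pi.smul_apply, innerSL_apply_apply]
  rw [show (inner ℝ x (EuclideanSpace.single j (1:ℝ)) : ℝ) = x j by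
    simp [EuclideanSpace.inner_single_right]]
  simp only [EuclideanSpace.single_apply, ↓reduceIte, Complex.ofReal_mul, Complex.ofReal_ofNat,
    Complex.ofReal_one]
  have hQc := Qc_ne hx
  field_simp
  push_cast
  ring

lemma sum_sq_c (x : Eu N) : (∑ j, (x j : ℂ) * (x j : ℂ)) = ((‖x‖^2 : ℝ) : ℂ) := by
  have h : (‖x‖^2:ℝ) = ∑ j, x j * x j := by
    rw [← real_inner_self_eq_norm_sq]
    simp only [PiLp.inner_apply, RCLike.inner_apply, conj_trivial]
  rw [h]
  push_cast
  rfl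

lemma lap_phi_mul (c : ℂ) {x : Eu N} (hx : x ≠ 0) {g : Eu N → ℂ}
    (hg : ContDiffOn ℝ ∞ g {x : Eu N | x ≠ 0}) :
    lap (fun y => (‖y‖:ℂ)^c * g y) x
      = c * (c + N - 2) * (‖x‖:ℂ)^c / ((‖x‖^2:ℝ):ℂ) * g x
        + 2 * c * (‖x‖:ℂ)^c / ((‖x‖^2:ℝ):ℂ) * fderiv ℝ g x x
        + (‖x‖:ℂ)^c * lap g x := by
  have step : ∀ j : Fin N,
      fderiv ℝ (fun y => fderiv ℝ (fun z => (‖z‖:ℂ)^c * g z) y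
          (EuclideanSpace.single j (1:ℝ))) x (EuclideanSpace.single j (1:ℝ))
      = (‖x‖:ℂ)^c * fderiv ℝ (fun y => fderiv ℝ g y (EuclideanSpace.single j 1)) x
          (EuclideanSpace.single j 1)
        + 2 * (c * (‖x‖:ℂ)^c / ((‖x‖^2:ℝ):ℂ)) * (x j : ℂ)
            * fderiv ℝ g x (EuclideanSpace.single j 1)
        + c * g x * (‖x‖:ℂ)^c * (((‖x‖^2:ℝ):ℂ))⁻¹
        + c * (c-2) * g x * (‖x‖:ℂ)^c * (((‖x‖^2:ℝ):ℂ))⁻¹ * (((‖x‖^2:ℝ):ℂ))⁻¹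
            * (x j : ℂ) * (x j : ℂ) := by
    intro j
    have hev : (fun y => fderiv ℝ (fun z => (‖z‖:ℂ)^c * g z) y
        (EuclideanSpace.single j (1:ℝ)))
        =ᶠ[nhds x] (fun y => (‖y‖:ℂ)^c * fderiv ℝ g y (EuclideanSpace.single j 1)
          + c * (g y * ((y j : ℝ):ℂ) * ((‖y‖:ℂ)^c * (((‖y‖^2:ℝ):ℂ))⁻¹))) := by
      filter_upwards [isOpen_ne.mem_nhds hx] with y hy
      exact pd_phi_mul c hy (da_of_cd hg hy) j
    rw [hev.fderiv_eq]
    exact pdA c hx (da_of_cd hg hx) j (da_of_cd (cd_pd hg _) hx)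
  unfold lap
  rw [Finset.sum_congr rfl fun j _ => step j]
  rw [Finset.sum_add_distrib, Finset.sum_add_distrib, Finset.sum_add_distrib]
  rw [← Finset.mul_sum]
  rw [show (∑ j : Fin N, 2 * (c * (‖x‖:ℂ)^c / ((‖x‖^2:ℝ):ℂ)) * (x j : ℂ)
      * fderiv ℝ g x (EuclideanSpace.single j 1))
    = 2 * (c * (‖x‖:ℂ)^c / ((‖x‖^2:ℝ):ℂ))
      * ∑ j : Fin N, (x j : ℂ) * fderiv ℝ g x (EuclideanSpace.single j 1) by
    rw [Finset.mul_sum]; exact Finset.sum_congr rfl fun j _ => by ring]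
  rw [← fderiv_self_eq_sum]
  rw [Finset.sum_const, Finset.card_univ, Fintype.card_fin]
  rw [show (∑ j : Fin N, c * (c-2) * g x * (‖x‖:ℂ)^c * (((‖x‖^2:ℝ):ℂ))⁻¹
      * (((‖x‖^2:ℝ):ℂ))⁻¹ * (x j : ℂ) * (x j : ℂ))
    = c * (c-2) * g x * (‖x‖:ℂ)^c * (((‖x‖^2:ℝ):ℂ))⁻¹ * (((‖x‖^2:ℝ):ℂ))⁻¹
      * ∑ j : Fin N, (x j : ℂ) * (x j : ℂ) by
    rw [Finset.mul_sum]; exact Finset.sum_congr rfl fun j _ => by ring]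
  rw [sum_sq_c]
  have hn : ((‖x‖:ℝ):ℂ) ≠ 0 := by exact_mod_cast norm_ne_zero_iff.mpr hx
  push_cast
  field_simp
  have hinv : ((‖x‖:ℝ):ℂ)^2 * (((‖x‖:ℝ):ℂ))⁻¹^2 = 1 := by
    rw [← mul_pow, mul_inv_cancel₀ hn, one_pow]
  linear_combination ((‖x‖:ℂ) ^ c * c * g x * (N:ℂ)) * hinv

lemma fderiv_lin {A B : Eu N → ℂ} {x : Eu N} (k1 k2 : ℂ)
    (hA : DifferentiableAt ℝ A x) (hB : DifferentiableAt ℝ B x) (v : Eu N) :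
    fderiv ℝ (fun y => k1 * A y + k2 * B y) x v
      = k1 * fderiv ℝ A x v + k2 * fderiv ℝ B x v := by
  rw [fderiv_fun_add (hA.const_mul k1) (hB.const_mul k2), fderiv_const_mul hA,
    fderiv_const_mul hB]
  simp [smul_eq_mul]

lemma euler_const_mul {A : Eu N → ℂ} {x : Eu N} (k : ℂ)
    (hA : DifferentiableAt ℝ A x) (v : Eu N) :
    fderiv ℝ (fun y => k * A y) x v = k * fderiv ℝ A x v := by
  rw [fderiv_const_mul hA]
  simp [smul_eq_mul]

lemma lap_lin (k1 k2 : ℂ) {A B : Eu N → ℂ} {x : Eu N} (hx : x ≠ 0)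
    (hA : ContDiffOn ℝ ∞ A {x : Eu N | x ≠ 0})
    (hB : ContDiffOn ℝ ∞ B {x : Eu N | x ≠ 0}) :
    lap (fun y => k1 * A y + k2 * B y) x = k1 * lap A x + k2 * lap B x := by
  unfold lap
  rw [Finset.mul_sum, Finset.mul_sum, ← Finset.sum_add_distrib]
  refine Finset.sum_congr rfl fun j _ => ?_
  have hev : (fun y => fderiv ℝ (fun z => k1 * A z + k2 * B z) y
      (EuclideanSpace.single j (1:ℝ)))
      =ᶠ[nhds x] (fun y => k1 * fderiv ℝ A y (EuclideanSpace.single j 1)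
        + k2 * fderiv ℝ B y (EuclideanSpace.single j 1)) := by
    filter_upwards [isOpen_ne.mem_nhds hx] with y hy
    exact fderiv_lin k1 k2 (da_of_cd hA hy) (da_of_cd hB hy) _
  rw [hev.fderiv_eq]
  exact fderiv_lin k1 k2 (da_of_cd (cd_pd hA _) hx) (da_of_cd (cd_pd hB _) hx) _

lemma lap_const_mul (k : ℂ) {A : Eu N → ℂ} {x : Eu N} (hx : x ≠ 0)
    (hA : ContDiffOn ℝ ∞ A {x : Eu N | x ≠ 0}) :
    lap (fun y => k * A y) x = k * lap A x := by
  unfold lap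
  rw [Finset.mul_sum]
  refine Finset.sum_congr rfl fun j _ => ?_
  have hev : (fun y => fderiv ℝ (fun z => k * A z) y (EuclideanSpace.single j (1:ℝ)))
      =ᶠ[nhds x] (fun y => k * fderiv ℝ A y (EuclideanSpace.single j 1)) := by
    filter_upwards [isOpen_ne.mem_nhds hx] with y hy
    exact euler_const_mul k (da_of_cd hA hy) _
  rw [hev.fderiv_eq]
  exact euler_const_mul k (da_of_cd (cd_pd hA _) hx) _

lemma pd_euler_comm {g : Eu N → ℂ} (hg : ContDiffOn ℝ ∞ g {x : Eu N | x ≠ 0})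
    {y : Eu N} (hy : y ≠ 0) (v : Eu N) :
    fderiv ℝ (fun z => fderiv ℝ g z z) y v
      = fderiv ℝ (fun z => fderiv ℝ g z v) y y + fderiv ℝ g y v := by
  have hdF : DifferentiableAt ℝ (fderiv ℝ g) y := da_fderiv hg hy
  have h1 : fderiv ℝ (fun z => fderiv ℝ g z z) y
      = (fderiv ℝ g y).comp (fderiv ℝ (fun z : Eu N => z) y)
        + (fderiv ℝ (fderiv ℝ g) y).flip y :=
    fderiv_clm_apply hdF differentiableAt_fun_id
  have h2 : fderiv ℝ (fun z => fderiv ℝ g z v) y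
      = (fderiv ℝ g y).comp (fderiv ℝ (fun _ : Eu N => v) y)
        + (fderiv ℝ (fderiv ℝ g) y).flip v :=
    fderiv_clm_apply hdF (differentiableAt_const v)
  have hsym : fderiv ℝ (fderiv ℝ g) y v y = fderiv ℝ (fderiv ℝ g) y y v := by
    have h2le : (2 : WithTop ℕ∞) ≤ ∞ := by
      rw [show (2 : WithTop ℕ∞) = ((2:ℕ∞) : WithTop ℕ∞) from rfl]
      exact_mod_cast le_top
    exact ((hg.contDiffAt (isOpen_ne.mem_nhds hy)).isSymmSndFDerivAt (by rw [minSmoothness_of_isRCLikeNormedField]; exact h2le)) v y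
  rw [h1, h2]
  simp [ContinuousLinearMap.flip_apply, fderiv_id', fderiv_const, hsym]
  ring

lemma lap_euler {f : Eu N → ℂ} (hf : ContDiffOn ℝ ∞ f {x : Eu N | x ≠ 0})
    {x : Eu N} (hx : x ≠ 0) :
    lap (fun y => fderiv ℝ f y y) x = fderiv ℝ (lap f) x x + 2 * lap f x := by
  have hstep : ∀ j : Fin N,
      fderiv ℝ (fun y => fderiv ℝ (fun z => fderiv ℝ f z z) y
        (EuclideanSpace.single j (1:ℝ))) x (EuclideanSpace.single j (1:ℝ))
      = fderiv ℝ (fun y => fderiv ℝ (fun z => fderiv ℝ f z (EuclideanSpace.single j 1)) y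
          (EuclideanSpace.single j 1)) x x
        + 2 * fderiv ℝ (fun y => fderiv ℝ f y (EuclideanSpace.single j 1)) x
            (EuclideanSpace.single j 1) := by
    intro j
    have hev : (fun y => fderiv ℝ (fun z => fderiv ℝ f z z) y
        (EuclideanSpace.single j (1:ℝ)))
        =ᶠ[nhds x] (fun y => fderiv ℝ (fun z => fderiv ℝ f z (EuclideanSpace.single j 1)) y y
          + fderiv ℝ f y (EuclideanSpace.single j 1)) := by
      filter_upwards [isOpen_ne.mem_nhds hx] with y hy
      exact pd_euler_comm hf hy _
    rw [hev.fderiv_eq, fderiv_fun_add (da_of_cd (cd_euler (cd_pd hf _)) hx)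
      (da_of_cd (cd_pd hf _) hx)]
    have h2 := pd_euler_comm (cd_pd hf (EuclideanSpace.single j 1)) hx
      (EuclideanSpace.single j (1:ℝ))
    simp only [ContinuousLinearMap.add_apply]
    rw [h2]
    ring
  unfold lap
  rw [Finset.sum_congr rfl fun j _ => hstep j]
  rw [Finset.sum_add_distrib, ← Finset.mul_sum]
  congr 1
  rw [fderiv_fun_sum fun j _ => da_of_cd (cd_pd (cd_pd hf _) _) hx]
  simp [ContinuousLinearMap.sum_apply]

lemma phi_mul_phi (a : ℂ) {x : Eu N} (hx : x ≠ 0) :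
    (‖x‖:ℂ)^(2-a) * (‖x‖:ℂ)^a = ((‖x‖^2 : ℝ) : ℂ) := by
  have hx' : (‖x‖ : ℂ) ≠ 0 := by simpa using (norm_ne_zero_iff.mpr hx)
  rw [← Complex.cpow_add _ _ hx', sub_add_cancel]
  rw [show (2:ℂ) = ((2:ℕ):ℂ) by norm_num, Complex.cpow_natCast]
  push_cast
  ring


lemma cd_phi (c : ℂ) : ContDiffOn ℝ ∞ (fun y : Eu N => (‖y‖:ℂ)^c) {x : Eu N | x ≠ 0} := by
  have hn2 : ContDiffOn ℝ ∞ (fun y : Eu N => ‖y‖^2) {x : Eu N | x ≠ 0} :=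
    (contDiff_norm_sq ℝ).contDiffOn
  have hlog : ContDiffOn ℝ ∞ (fun y : Eu N => Real.log (‖y‖^2)) {x : Eu N | x ≠ 0} := by
    intro y hy
    exact (hn2 y hy).log (pow_ne_zero 2 (norm_ne_zero_iff.mpr hy))
  have houter : ContDiff ℝ ∞ (fun t : ℝ => Complex.exp ((c/2) * (t:ℂ))) := by
    have h1 : ContDiff ℝ ∞ (fun t : ℝ => ((t:ℂ))) := Complex.ofRealCLM.contDiff
    have h2 : ContDiff ℝ ∞ (fun t : ℝ => (c/2) * (t:ℂ)) :=
      (contDiff_const (c := (c/2))).mul h1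
    exact (Complex.contDiff_exp : ContDiff ℝ ∞ Complex.exp).comp h2
  have hcomp := houter.comp_contDiffOn hlog
  refine hcomp.congr fun y hy => ?_
  have hy' : (‖y‖ : ℂ) ≠ 0 := by
    simpa using (norm_ne_zero_iff.mpr (hy : y ≠ (0:Eu N)))
  show (‖y‖:ℂ)^c = Complex.exp ((c/2) * ((Real.log (‖y‖^2) : ℝ) : ℂ))
  rw [Complex.cpow_def_of_ne_zero hy', ← Complex.ofReal_log (norm_nonneg y), Real.log_pow]
  push_cast
  ring_nf

end SL2Aux

open SL2Aux
open scoped ContDiff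

set_option maxHeartbeats 1000000 in
theorem stmt11 (N : ℕ) (hN : 1 ≤ N) (a : ℂ) (ha : a ≠ 0)
    (f : EuclideanSpace ℝ (Fin N) → ℂ)
    (hf : ContDiffOn ℝ (⊤ : ℕ∞) f {x : EuclideanSpace ℝ (Fin N) | x ≠ 0})
    (x : EuclideanSpace ℝ (Fin N)) (hx : x ≠ 0) :
    opH a (opEp a f) x - opEp a (opH a f) x = 2 * opEp a f x ∧
    opH a (opEm a f) x - opEm a (opH a f) x = -2 * opEm a f x ∧
    opEp a (opEm a f) x - opEm a (opEp a f) x = opH a f x := by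
  have hf' : ContDiffOn ℝ ∞ f {x : EuclideanSpace ℝ (Fin N) | x ≠ 0} := hf.of_le (by simp)
  have hfd : DifferentiableAt ℝ f x := da_of_cd hf' hx
  have hx' : (‖x‖ : ℂ) ≠ 0 := by simpa using (norm_ne_zero_iff.mpr hx)
  have hQne := Qc_ne hx
  have hEp_eq : opEp a f = fun y => (Complex.I/a) * ((‖y‖:ℂ)^a * f y) := by
    funext y; unfold opEp; ring
  have hEm_eq : opEm a f = fun y => (Complex.I/a) * ((‖y‖:ℂ)^(2-a) * lap f y) := by
    funext y; unfold opEm; ring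
  have hlapcd : ContDiffOn ℝ ∞ (lap f) {x : EuclideanSpace ℝ (Fin N) | x ≠ 0} := cd_lap hf'
  refine ⟨?_, ?_, ?_⟩
  · -- [H, E+] = 2 E+
    have e1 : eulerOp (opEp a f) x
        = (Complex.I/a) * (a * (‖x‖:ℂ)^a * f x + (‖x‖:ℂ)^a * fderiv ℝ f x x) := by
      unfold eulerOp
      rw [hEp_eq, euler_const_mul _ ((hasFDerivAt_phi a hx).differentiableAt.fun_mul hfd) x,
        euler_phi_mul a hx hfd]
    simp only [opH]
    rw [e1]
    simp only [opEp, opH, eulerOp]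
    field_simp
    ring
  · -- [H, E-] = -2 E-
    have e2a : eulerOp (opEm a f) x
        = (Complex.I/a) * ((2-a) * (‖x‖:ℂ)^(2-a) * lap f x
            + (‖x‖:ℂ)^(2-a) * fderiv ℝ (lap f) x x) := by
      unfold eulerOp
      rw [hEm_eq, euler_const_mul _
        ((hasFDerivAt_phi (2-a) hx).differentiableAt.fun_mul (da_of_cd hlapcd hx)) x,
        euler_phi_mul (2-a) hx (da_of_cd hlapcd hx)]
    have e2b : lap (opH a f) x
        = (2/a) * (fderiv ℝ (lap f) x x + 2 * lap f x) + ((a + N - 2)/a) * lap f x := by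
      rw [show opH a f = fun y => (2/a) * (fun z => fderiv ℝ f z z) y
          + ((a + N - 2)/a) * f y from rfl]
      rw [lap_lin (2/a) ((a + N - 2)/a) hx (cd_euler hf') hf', lap_euler hf' hx]
    simp only [opH]
    rw [e2a]
    simp only [opEm]
    rw [e2b]
    field_simp
    ring
  · -- [E+, E-] = H
    have hphia_ne : (‖x‖:ℂ)^a ≠ 0 := by
      rw [Complex.cpow_def_of_ne_zero hx']; exact Complex.exp_ne_zero _
    have e3 : lap (opEp a f) x
        = (Complex.I/a) * (a * (a + N - 2) * (‖x‖:ℂ)^a / ((‖x‖^2:ℝ):ℂ) * f x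
            + 2 * a * (‖x‖:ℂ)^a / ((‖x‖^2:ℝ):ℂ) * fderiv ℝ f x x
            + (‖x‖:ℂ)^a * lap f x) := by
      rw [hEp_eq, lap_const_mul _ hx ((cd_phi a).mul hf'), lap_phi_mul a hx hf']
    rw [show opEp a (opEm a f) x = (Complex.I/a) * ((‖x‖:ℂ)^a)
        * ((Complex.I/a) * ((‖x‖:ℂ)^(2-a)) * lap f x) from rfl]
    rw [show opEm a (opEp a f) x
        = (Complex.I/a) * ((‖x‖:ℂ)^(2-a)) * lap (opEp a f) x from rfl]
    rw [show opH a f x = (2/a) * fderiv ℝ f x x + ((a + N - 2)/a) * f x from rfl]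
    rw [e3]
    have key : (‖x‖:ℂ)^(2-a) = ((‖x‖^2:ℝ):ℂ) / (‖x‖:ℂ)^a := by
      rw [eq_div_iff hphia_ne]; exact phi_mul_phi a hx
    rw [key]
    push_cast
    field_simp [hphia_ne, hx', ha]
    ring_nf
    simp only [Complex.I_sq]
    ring_nf

end
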